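/- Let A : ℝ → gl_n(ℝ) be a differentiable curve of matrices satisfying A' = -tr(S(A)²)·A + (1/2)[A,[A,Aᵗ]] - (1/2)tr(A)·[A,Aᵗ], where S(A) = (A+Aᵗ)/2. Then (d/dt)‖A(t)‖² = -2·tr(S(A)²)·‖A‖² - ‖[A,Aᵗ]‖² ≤ 0, so t ↦ ‖A(t)‖ is non-increasing. -/

import Mathlib

open Matrix Filter

noncomputable section

abbrev Mat (n : ℕ) := Matrix (Fin n) (Fin n) ℝ

/-- Commutator bracket of matrices. -/
def bkt {n : ℕ} (X Y : Mat n) : Mat n := X * Y - Y * X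

/-- Frobenius inner product ⟨X,Y⟩ = tr(XYᵗ). -/
def frob {n : ℕ} (X Y : Mat n) : ℝ := Matrix.trace (X * Yᵀ)

/-- Squared Frobenius norm ‖X‖² = tr(XXᵗ). -/
def sqnorm {n : ℕ} (X : Mat n) : ℝ := frob X X

/-- Symmetric part S(X) = (X+Xᵗ)/2. -/
def symPart {n : ℕ} (X : Mat n) : Mat n := (1/2 : ℝ) • (X + Xᵀ)

/-- Right-hand side of the bracket flow ODE. -/
def rhs {n : ℕ} (A : Mat n) : Mat n :=
  (-(Matrix.trace (symPart A * symPart A))) • A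
    + (1/2 : ℝ) • bkt A (bkt A Aᵀ)
    - ((1/2 : ℝ) * Matrix.trace A) • bkt A Aᵀ

/-! Since `d/dt ‖A‖² = 2⟨A, A'⟩`, it suffices to pair `A` with the three terms of the flow
in the Frobenius inner product: the scalar term gives `-tr(S(A)²)‖A‖²`, the double bracket
gives `-½‖[A,Aᵗ]‖²` by ad-invariance `⟨X, [Y,Z]⟩ = ⟨[Yᵗ,X], Z⟩`, and the last term is
orthogonal to `A` by cyclicity of the trace. Both surviving terms are non-positive, as `tr(S(A)²) = ‖S(A)‖²`. -/

section Frobenius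

variable {n : ℕ}

lemma frob_eq_sum (X Y : Mat n) : frob X Y = ∑ i, ∑ j, X i j * Y i j := by
  simp [frob, Matrix.trace, Matrix.mul_apply]

lemma sqnorm_nonneg (X : Mat n) : 0 ≤ sqnorm X := by
  rw [sqnorm, frob_eq_sum]
  exact Finset.sum_nonneg fun i _ => Finset.sum_nonneg fun j _ => mul_self_nonneg _

lemma frob_add_right (X Y Z : Mat n) : frob X (Y + Z) = frob X Y + frob X Z := by
  simp [frob, Matrix.mul_add]

lemma frob_sub_right (X Y Z : Mat n) : frob X (Y - Z) = frob X Y - frob X Z := by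
  simp [frob, Matrix.mul_sub]

lemma frob_smul_right (X Y : Mat n) (c : ℝ) : frob X (c • Y) = c * frob X Y := by
  simp [frob]

lemma bkt_swap (X Y : Mat n) : bkt X Y = -bkt Y X := by
  simp [bkt]

lemma frob_bkt_right (X Y Z : Mat n) : frob X (bkt Y Z) = frob (bkt Yᵀ X) Z := by
  simp only [frob, bkt, transpose_sub, transpose_mul, Matrix.mul_sub, Matrix.sub_mul,
    trace_sub, ← Matrix.mul_assoc]
  rw [trace_mul_cycle X Zᵀ Yᵀ]

lemma frob_bkt_self_transpose (X : Mat n) : frob X (bkt X Xᵀ) = 0 := by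
  simp only [frob, bkt, transpose_sub, transpose_mul, transpose_transpose, Matrix.mul_sub,
    trace_sub, ← Matrix.mul_assoc]
  rw [sub_eq_zero, Matrix.mul_assoc, trace_mul_comm X]

lemma frob_bkt_bkt_self_transpose (X : Mat n) :
    frob X (bkt X (bkt X Xᵀ)) = -sqnorm (bkt X Xᵀ) := by
  rw [frob_bkt_right, bkt_swap, sqnorm, frob, frob, Matrix.neg_mul, trace_neg]

lemma trace_symPart_sq_nonneg (X : Mat n) : 0 ≤ Matrix.trace (symPart X * symPart X) := by
  have hS : (symPart X)ᵀ = symPart X := by simp [symPart, add_comm]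
  simpa [sqnorm, frob, hS] using sqnorm_nonneg (symPart X)

end Frobenius

lemma frob_rhs {n : ℕ} (A : Mat n) :
    frob A (rhs A) = -Matrix.trace (symPart A * symPart A) * sqnorm A
      - (1/2 : ℝ) * sqnorm (bkt A Aᵀ) := by
  rw [rhs, frob_sub_right, frob_add_right, frob_smul_right, frob_smul_right, frob_smul_right,
    frob_bkt_bkt_self_transpose, frob_bkt_self_transpose]
  unfold sqnorm
  ring

lemma hasDerivAt_sqnorm {n : ℕ} {A : ℝ → Mat n} {A' : Mat n} {t : ℝ}
    (hA : ∀ i j, HasDerivAt (fun s => A s i j) (A' i j) t) :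
    HasDerivAt (fun s => sqnorm (A s)) (2 * frob (A t) A') t := by
  simp only [sqnorm, frob_eq_sum, Finset.mul_sum]
  refine HasDerivAt.fun_sum fun i _ => HasDerivAt.fun_sum fun j _ => ?_
  rw [show 2 * (A t i j * A' i j) = A' i j * A t i j + A t i j * A' i j by ring]
  exact (hA i j).fun_mul (hA i j)

theorem stmt7 {n : ℕ} (A : ℝ → Mat n)
    (hA : ∀ t : ℝ, ∀ i j, HasDerivAt (fun s => A s i j) (rhs (A t) i j) t) :
    (∀ t : ℝ, HasDerivAt (fun s => sqnorm (A s))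
      (-2 * Matrix.trace (symPart (A t) * symPart (A t)) * sqnorm (A t)
        - sqnorm (bkt (A t) (A t)ᵀ)) t) ∧
    (∀ t : ℝ, -2 * Matrix.trace (symPart (A t) * symPart (A t)) * sqnorm (A t)
        - sqnorm (bkt (A t) (A t)ᵀ) ≤ 0) ∧
    Antitone (fun t => Real.sqrt (sqnorm (A t))) := by
  have hderiv : ∀ t, HasDerivAt (fun s => sqnorm (A s))
      (-2 * Matrix.trace (symPart (A t) * symPart (A t)) * sqnorm (A t)
        - sqnorm (bkt (A t) (A t)ᵀ)) t := by
    intro t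
    convert hasDerivAt_sqnorm (hA t) using 1
    rw [frob_rhs]
    ring
  have hnonpos : ∀ t, -2 * Matrix.trace (symPart (A t) * symPart (A t)) * sqnorm (A t)
      - sqnorm (bkt (A t) (A t)ᵀ) ≤ 0 := fun t => by
    nlinarith [mul_nonneg (trace_symPart_sq_nonneg (A t)) (sqnorm_nonneg (A t)),
      sqnorm_nonneg (bkt (A t) (A t)ᵀ)]
  have hanti : Antitone fun t => sqnorm (A t) :=
    antitone_of_deriv_nonpos (fun t => (hderiv t).differentiableAt)
      fun t => (hderiv t).deriv ▸ hnonpos t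
  exact ⟨hderiv, hnonpos, Real.sqrt_monotone.comp_antitone hanti⟩
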